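/- Let ε_1, ..., ε_n, ε_{n+1} be real-valued exchangeable random variables with no ties almost surely, let α ∈ (1/(n+1), 1), and let q̂ = ε_{(⌈(n+1)(1−α)⌉)} be the ⌈(n+1)(1−α)⌉-th order statistic of ε_1, ..., ε_n (equivalently, the ⌈(n+1)(1−α)⌉/n empirical quantile of {ε_1, ..., ε_n}). Then P(ε_{n+1} ≤ q̂) = ⌈(n+1)(1−α)⌉/(n+1). -/

import Mathlib

/-!
Without ties, the ranks `#{j | ε j < ε i}` of the `n + 1` variables are almost surely a
permutation of `0, …, n`, so almost surely exactly `k` of them are `< k`. By exchangeability the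
probability that `ε i` has rank `< k` is the same for every `i`, and these `n + 1` probabilities
sum to `k`. Finally `ε (n + 1) ≤ q̂`, with `q̂` the `k`-th smallest of the first `n` values, says
exactly that fewer than `k` of them lie below `ε (n + 1)`, i.e. that its rank is `< k`.
-/

open MeasureTheory

/-- A finite family of random variables is exchangeable if every permutation of the
indices leaves the joint distribution unchanged. -/
def Exchangeable {Ω 𝒵 : Type*} [MeasurableSpace Ω] [MeasurableSpace 𝒵]
    (μ : Measure Ω) {n : ℕ} (Z : Fin n → Ω → 𝒵) : Prop :=
  ∀ π : Equiv.Perm (Fin n),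
    Measure.map (fun ω => fun i => Z (π i) ω) μ = Measure.map (fun ω => fun i => Z i ω) μ

/-- The `k`-th order statistic (0-indexed) of the values `v 0, ..., v (m-1)`:
the `(k+1)`-th smallest value. -/
noncomputable def orderStat {m : ℕ} (v : Fin m → ℝ) (k : Fin m) : ℝ :=
  ((List.ofFn v).insertionSort (· ≤ ·)).get
    (Fin.cast (by simp) k)

section

open Finset

section Rank

variable {ι α : Type*} [Fintype ι] [LinearOrder α]

/-- Counted from `0`: a smallest entry has rank `0`. -/
def rank (v : ι → α) (i : ι) : ℕ := #{j | v j < v i}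

lemma rank_lt_card (v : ι → α) (i : ι) : rank v i < Fintype.card ι :=
  card_lt_univ_of_notMem (x := i) (by simp)

lemma rank_lt_rank (v : ι → α) {i j : ι} (h : v i < v j) : rank v i < rank v j := by
  refine card_lt_card <| (ssubset_iff_of_subset fun l hl => ?_).2 ⟨i, by simpa using h, by simp⟩
  simp only [mem_filter, mem_univ, true_and] at hl ⊢
  exact hl.trans h

lemma rank_injective {v : ι → α} (hv : Function.Injective v) : Function.Injective (rank v) := by
  intro i j hij
  by_contra hne
  rcases (hv.ne hne).lt_or_gt with h | h
  · exact (rank_lt_rank v h).ne hij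
  · exact (rank_lt_rank v h).ne' hij

lemma image_rank_eq_range {v : ι → α} (hv : Function.Injective v) :
    univ.image (rank v) = range (Fintype.card ι) := by
  refine eq_of_subset_of_card_le (fun r hr => ?_) ?_
  · obtain ⟨i, -, rfl⟩ := mem_image.1 hr
    exact mem_range.2 (rank_lt_card v i)
  · rw [card_image_of_injective _ (rank_injective hv), card_range, card_univ]

lemma card_rank_lt {v : ι → α} (hv : Function.Injective v) {k : ℕ}
    (hk : k ≤ Fintype.card ι) : #{i | rank v i < k} = k := by
  rw [← card_image_of_injective _ (rank_injective hv), ← filter_image (p := (· < k)),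
    image_rank_eq_range hv,
    show (range (Fintype.card ι)).filter (· < k) = range k by ext; simp; omega, card_range]

lemma rank_comp_perm (v : ι → α) (σ : Equiv.Perm ι) (i : ι) :
    rank (v ∘ σ) i = rank v (σ i) :=
  card_equiv σ (by simp)

lemma rank_last {n : ℕ} (v : Fin (n + 1) → α) :
    rank v (Fin.last n) = #{i : Fin n | v i.castSucc < v (Fin.last n)} := by
  simp only [rank, card_filter, Fin.sum_univ_castSucc, lt_irrefl, if_false, add_zero]

end Rank

section OrderStatistics

lemma List.countP_ofFn {α : Type*} {n : ℕ} (w : Fin n → α) (p : α → Prop) [DecidablePred p] :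
    (ofFn w).countP (fun a => decide (p a)) = #{i | p (w i)} := by
  rw [← Multiset.coe_countP, ← Fin.univ_val_map, Multiset.countP_map, ← card_val, filter_val]

lemma Monotone.lt_card_filter_lt_iff {α : Type*} [LinearOrder α] {L : ℕ} {g : Fin L → α}
    (hg : Monotone g) (m : Fin L) (x : α) : (m : ℕ) < #{j | g j < x} ↔ g m < x := by
  constructor
  · intro hm
    by_contra! hx
    have hsub : ({j | g j < x} : Finset (Fin L)) ⊆ Iio m := fun j hj =>
      mem_Iio.2 <| lt_of_not_ge fun hmj => (hx.trans (hg hmj)).not_gt (mem_filter.1 hj).2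
    exact hm.not_ge ((card_le_card hsub).trans (Fin.card_Iio m).le)
  · intro hx
    have hsub : Iic m ⊆ ({j | g j < x} : Finset (Fin L)) := fun j hj => by
      simpa using (hg (mem_Iic.1 hj)).trans_lt hx
    exact (Nat.lt_succ_self m).trans_le ((Fin.card_Iic m).symm.trans_le (card_le_card hsub))

lemma List.Pairwise.get_lt_iff_lt_countP {α : Type*} [LinearOrder α] {l : List α}
    (hl : l.Pairwise (· ≤ ·)) (m : Fin l.length) (x : α) :
    l.get m < x ↔ (m : ℕ) < l.countP (· < x) := by
  rw [show l.countP (· < x) = #{j | l.get j < x} by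
    simpa only [List.ofFn_get] using List.countP_ofFn l.get (· < x)]
  exact (Monotone.lt_card_filter_lt_iff (fun a b hab => hl.rel_get_of_le hab) m x).symm

lemma le_orderStat_iff {m : ℕ} (w : Fin m → ℝ) (k : Fin m) (x : ℝ) :
    x ≤ orderStat w k ↔ #{i | w i < x} ≤ k := by
  rw [← not_lt, orderStat, (List.pairwise_insertionSort _ _).get_lt_iff_lt_countP,
    (List.perm_insertionSort _ _).countP_eq, List.countP_ofFn, not_lt]
  simp

end OrderStatistics

section Exchangeable

variable {Ω : Type*} [MeasurableSpace Ω] {μ : Measure Ω}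

lemma Exchangeable.measure_preimage_comp_perm {β : Type*} [MeasurableSpace β] {m : ℕ}
    {Z : Fin m → Ω → β} (hexch : Exchangeable μ Z) (hZ : ∀ i, Measurable (Z i))
    (π : Equiv.Perm (Fin m)) {S : Set (Fin m → β)} (hS : MeasurableSet S) :
    μ {ω | (fun i => Z (π i) ω) ∈ S} = μ {ω | (fun i => Z i ω) ∈ S} := by
  have h := congrArg (· S) (hexch π)
  rw [Measure.map_apply (measurable_pi_lambda _ fun i => hZ (π i)) hS,
    Measure.map_apply (measurable_pi_lambda _ hZ) hS] at h
  exact h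

lemma ae_injective_of_measure_eq_zero {ι β : Type*} [Countable ι] {Z : ι → Ω → β}
    (hties : ∀ i j, i ≠ j → μ {ω | Z i ω = Z j ω} = 0) :
    ∀ᵐ ω ∂μ, Function.Injective fun i => Z i ω := by
  have hpair : ∀ i j, ∀ᵐ ω ∂μ, Z i ω = Z j ω → i = j := fun i j => by
    by_cases hij : i = j
    · exact .of_forall fun _ _ => hij
    · exact measure_eq_zero_iff_ae_notMem.1 (hties i j hij) |>.mono fun ω h h' => absurd h' h
  filter_upwards [ae_all_iff.2 fun i => ae_all_iff.2 (hpair i)] with ω hω i j using hω i j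

lemma sum_measure_eq_of_ae_card_eq {ι : Type*} [Fintype ι] {E : ι → Set Ω}
    [∀ i ω, Decidable (ω ∈ E i)] (hE : ∀ i, MeasurableSet (E i)) {k : ℕ}
    (h : ∀ᵐ ω ∂μ, #{i | ω ∈ E i} = k) :
    ∑ i, μ (E i) = k * μ Set.univ :=
  calc ∑ i, μ (E i) = ∑ i, ∫⁻ ω, (E i).indicator 1 ω ∂μ := by
        simp only [lintegral_indicator_one (hE _)]
    _ = ∫⁻ ω, ∑ i, (E i).indicator 1 ω ∂μ :=
        (lintegral_finsetSum _ fun i _ => measurable_one.indicator (hE i)).symm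
    _ = ∫⁻ _, (k : ENNReal) ∂μ := lintegral_congr_ae <| h.mono fun ω hω => by
        simp [Set.indicator_apply, sum_boole, hω]
    _ = k * μ Set.univ := lintegral_const _

variable {𝒵 : Type*} [LinearOrder 𝒵] [TopologicalSpace 𝒵] [OrderClosedTopology 𝒵]
  [SecondCountableTopology 𝒵] [MeasurableSpace 𝒵] [OpensMeasurableSpace 𝒵]

lemma measurable_rank {ι : Type*} [Fintype ι] (i : ι) :
    Measurable fun v : ι → 𝒵 => rank v i := by
  simp_rw [rank, card_filter]
  exact Finset.measurable_sum _ fun j _ => Measurable.ite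
    (measurableSet_lt (measurable_pi_apply j) (measurable_pi_apply i)) measurable_const
    measurable_const

lemma Exchangeable.measure_rank_eq {m : ℕ} {Z : Fin m → Ω → 𝒵} (hexch : Exchangeable μ Z)
    (hZ : ∀ i, Measurable (Z i)) (p : ℕ → Prop) (i j : Fin m) :
    μ {ω | p (rank (fun l => Z l ω) i)} = μ {ω | p (rank (fun l => Z l ω) j)} := by
  have h := hexch.measure_preimage_comp_perm hZ (Equiv.swap i j)
    (measurable_rank j (MeasurableSet.of_discrete (s := {r | p r})))
  have hrank : ∀ ω, rank (fun l => Z (Equiv.swap i j l) ω) j = rank (fun l => Z l ω) i :=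
    fun ω => (rank_comp_perm (fun l => Z l ω) _ j).trans (by rw [Equiv.swap_apply_right])
  simpa only [Set.mem_preimage, Set.mem_ofPred_eq, hrank] using h

theorem Exchangeable.measure_rank_lt [IsProbabilityMeasure μ] {m : ℕ} {Z : Fin m → Ω → 𝒵}
    (hexch : Exchangeable μ Z) (hZ : ∀ i, Measurable (Z i))
    (hties : ∀ i j, i ≠ j → μ {ω | Z i ω = Z j ω} = 0) {k : ℕ} (hk : k ≤ m) (i : Fin m) :
    μ {ω | rank (fun l => Z l ω) i < k} = k / m := by
  have hsum : ∑ j : Fin m, μ {ω | rank (fun l => Z l ω) j < k} = k := by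
    rw [sum_measure_eq_of_ae_card_eq, measure_univ, mul_one]
    · exact fun j => (measurable_rank j).comp (measurable_pi_lambda _ hZ) measurableSet_Iio
    · filter_upwards [ae_injective_of_measure_eq_zero hties] with ω hω
      simpa using card_rank_lt hω (by simpa using hk)
  rw [sum_congr rfl fun j _ => hexch.measure_rank_eq hZ (· < k) j i, sum_const, card_univ,
    Fintype.card_fin, nsmul_eq_mul] at hsum
  have hm : (m : ENNReal) ≠ 0 := by simpa using i.pos.ne'
  rw [ENNReal.eq_div_iff hm (ENNReal.natCast_ne_top m), hsum]

end Exchangeable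

end

/-- If `ε 1, ..., ε n, ε (n+1)` are exchangeable real random variables with no ties
almost surely, `α ∈ (1/(n+1), 1)`, and `q̂` is the `⌈(n+1)(1-α)⌉`-th order statistic
(1-indexed) of the first `n` of them, then `P(ε (n+1) ≤ q̂) = ⌈(n+1)(1-α)⌉ / (n+1)`. -/
theorem prob_le_empirical_quantile {Ω : Type*} [MeasurableSpace Ω]
    (μ : Measure Ω) [IsProbabilityMeasure μ] {n : ℕ}
    (ε : Fin (n + 1) → Ω → ℝ) (hmeas : ∀ i, Measurable (ε i))
    (hexch : Exchangeable μ ε)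
    (hties : ∀ i j, i ≠ j → μ {ω | ε i ω = ε j ω} = 0)
    (α : ℝ) (hα1 : 1 / ((n : ℝ) + 1) < α) (hα2 : α < 1) :
    μ {ω | ε (Fin.last n) ω ≤
        orderStat (fun i : Fin n => ε i.castSucc ω)
          ⟨⌈((n : ℝ) + 1) * (1 - α)⌉₊ - 1, by
            have hn : (0 : ℝ) < (n : ℝ) + 1 := by positivity
            have h1 : (1 : ℝ) < α * ((n : ℝ) + 1) := (div_lt_iff₀ hn).mp hα1
            have hx : ((n : ℝ) + 1) * (1 - α) < (n : ℝ) := by nlinarith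
            have hceil : ⌈((n : ℝ) + 1) * (1 - α)⌉₊ ≤ n := Nat.ceil_le.mpr hx.le
            have hpos : 0 < ⌈((n : ℝ) + 1) * (1 - α)⌉₊ := by
              rw [Nat.ceil_pos]; nlinarith
            omega⟩} =
      ((⌈((n : ℝ) + 1) * (1 - α)⌉₊ : ENNReal)) / ((n : ENNReal) + 1) := by
  set k := ⌈((n : ℝ) + 1) * (1 - α)⌉₊
  have hα0 : 0 < α := lt_trans (by positivity) hα1
  have hk1 : 0 < k := Nat.ceil_pos.2 (mul_pos (by positivity) (by linarith))
  have hkn : k ≤ n + 1 := Nat.ceil_le.2 (by push_cast; nlinarith)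
  have hprob := hexch.measure_rank_lt hmeas hties hkn (Fin.last n)
  push_cast at hprob
  rw [← hprob]
  congr 1
  ext ω
  rw [Set.mem_ofPred_eq, Set.mem_ofPred_eq, le_orderStat_iff, rank_last, Fin.val_mk]
  omega
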